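/- (Proposition 5.4: 2-bounding implies d_Δ is a distance.) Assume E ⊆ ℂ^d is open, every entry of Δ is holomorphic on E, and B_Δ is a nonempty connected open set. Suppose B_Δ is 2-bounding, i.e., sup{ ‖T^r‖ : 1 ≤ r ≤ d, T a generic tuple with σ(T) ⊆ B_Δ and ‖Δ(T)‖ ≤ 1 } < ∞. Then for all z, w ∈ B_Δ, d_Δ(z, w) = 0 implies z = w. -/

import Mathlib

open scoped Matrix.Norms.L2Operator ComplexOrder
open Matrix

noncomputable section

open scoped Classical in
/-- Square root of a positive semidefinite matrix (junk value `0` otherwise). -/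
def msqrt {n' : Type*} [Fintype n'] [DecidableEq n'] (M : Matrix n' n' ℂ) : Matrix n' n' ℂ :=
  if h : M.PosSemidef then
    (h.isHermitian.eigenvectorUnitary : Matrix n' n' ℂ) *
      diagonal ((↑) ∘ Real.sqrt ∘ h.isHermitian.eigenvalues) *
      star (h.isHermitian.eigenvectorUnitary : Matrix n' n' ℂ) else 0

/-- The pseudo-distance `d_Δ`. -/
def dDelta {α m' n' : Type*} [Fintype m'] [Fintype n'] [DecidableEq m'] [DecidableEq n']
    (Δ : α → Matrix m' n' ℂ) (z w : α) : ℝ :=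
  ‖(msqrt (1 - Δ w * (Δ w)ᴴ))⁻¹ * ((Δ z - Δ w) *
      ((1 - (Δ w)ᴴ * Δ z)⁻¹ * msqrt (1 - (Δ w)ᴴ * Δ w)))‖

/-- `B_Δ = {z ∈ E : ‖Δ(z)‖ < 1}`. -/
def BDelta {α m' n' : Type*} [Fintype m'] [Fintype n'] [DecidableEq n'] (E : Set α)
    (Δ : α → Matrix m' n' ℂ) : Set α :=
  {z | z ∈ E ∧ ‖Δ z‖ < 1}

/-- pseudo-hyperbolic distance on the unit disk -/
def dDisk (a b : ℂ) : ℝ := ‖a - b‖ / ‖1 - (starRingEnd ℂ) b * a‖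

/-- elementary tensor `ξ ⊗ v` in `ℂ^m ⊗ ℂ^2`, realized as a function on `m × Fin 2` -/
def tpr {m' : Type*} (ξ : m' → ℂ) (v : Fin 2 → ℂ) : m' × Fin 2 → ℂ :=
  fun p => ξ p.1 * v p.2

/-- inner product, conjugate-linear in the second variable -/
def herm {m' : Type*} [Fintype m'] (ξ η : m' → ℂ) : ℂ :=
  ∑ p, ξ p * (starRingEnd ℂ) (η p)

/-- positive semidefiniteness of a `2 × 2` kernel `(a i j)` -/
def PSD2 (a : Fin 2 → Fin 2 → ℂ) : Prop :=
  ∀ c : Fin 2 → ℂ, 0 ≤ ∑ i, ∑ j, a i j * c i * (starRingEnd ℂ) (c j)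

/-- `T` is a generic tuple with joint eigenvectors `v` and joint eigenvalues `z 0 ≠ z 1`. -/
def IsGenericTuple {d : ℕ} (T : Fin d → Matrix (Fin 2) (Fin 2) ℂ)
    (v : Fin 2 → Fin 2 → ℂ) (z : Fin 2 → Fin d → ℂ) : Prop :=
  LinearIndependent ℂ v ∧ z 0 ≠ z 1 ∧ ∀ i j, T i *ᵥ v j = z j i • v j

/-- `‖Δ(T)‖ ≤ 1`, where `Δ(T)` is the matrix on `ℂ^s ⊗ ℂ^2` determined by
`Δ(T)(e_i ⊗ v_j) = (Δ(z_j) e_i) ⊗ v_j`. -/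
def DeltaTContract {β : Type*} {s r : ℕ} (Δ : β → Matrix (Fin s) (Fin r) ℂ)
    (v : Fin 2 → Fin 2 → ℂ) (z : Fin 2 → β) : Prop :=
  ∀ DT : Matrix (Fin s × Fin 2) (Fin r × Fin 2) ℂ,
    (∀ (i : Fin r) (j : Fin 2),
      DT *ᵥ tpr (Pi.single i 1) (v j) = tpr (Δ (z j) *ᵥ Pi.single i 1) (v j)) →
    ‖DT‖ ≤ 1

/-- membership in the class `S_{2,gen}(B_Δ)` -/
def MemS2gen {d s r : ℕ} (E : Set (Fin d → ℂ)) (Δ : (Fin d → ℂ) → Matrix (Fin s) (Fin r) ℂ)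
    (f : (Fin d → ℂ) → ℂ) : Prop :=
  ∀ (T : Fin d → Matrix (Fin 2) (Fin 2) ℂ) (v : Fin 2 → Fin 2 → ℂ) (z : Fin 2 → Fin d → ℂ),
    IsGenericTuple T v z → (∀ j, z j ∈ BDelta E Δ) → DeltaTContract Δ v z →
    ∀ fT : Matrix (Fin 2) (Fin 2) ℂ, (∀ j, fT *ᵥ v j = f (z j) • v j) → ‖fT‖ ≤ 1

/-- the Möbius pseudo-distance of a domain `Ω` -/
def dMobius {α : Type*} [NormedAddCommGroup α] [NormedSpace ℂ α] (Ω : Set α) (z w : α) : ℝ :=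
  sSup {x | ∃ g : α → ℂ, DifferentiableOn ℂ g Ω ∧ (∀ ζ ∈ Ω, ‖g ζ‖ < 1) ∧ x = dDisk (g z) (g w)}

/-- `Ω` is a complete spectral domain for the diagonalizable tuple with eigenvectors `v` and
joint eigenvalues `z 0, z 1`. -/
def IsCompleteSpectralDomainFor {α : Type*} [NormedAddCommGroup α] [NormedSpace ℂ α]
    (Ω : Set α) (v : Fin 2 → Fin 2 → ℂ) (z : Fin 2 → α) : Prop :=
  ∀ (n : ℕ) (F : α → Matrix (Fin n) (Fin n) ℂ),
    (∀ i j, DifferentiableOn ℂ (fun ζ => F ζ i j) Ω) →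
    ∀ C : ℝ, (∀ ζ ∈ Ω, ‖F ζ‖ ≤ C) →
    ∀ FT : Matrix (Fin n × Fin 2) (Fin n × Fin 2) ℂ,
      (∀ (ξ : Fin n → ℂ) (j : Fin 2), FT *ᵥ tpr ξ (v j) = tpr (F (z j) *ᵥ ξ) (v j)) →
      ‖FT‖ ≤ C


/-! If `d_Δ(z, w) = 0` with `z, w ∈ B_Δ`, then `Δ z = Δ w`, because the two square-root factors
and `I - Δ(w)* Δ(z)` in `d_Δ` are invertible when `‖Δ z‖, ‖Δ w‖ < 1`. If moreover `z ≠ w`, the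
upper-triangular tuples `T_ε = [[z, (w - z) / ε], [0, w]]` are generic with joint eigenvectors
`(1, 0)`, `(1, ε)` and joint eigenvalues `z`, `w`. Since `Δ` takes one value at both points,
`Δ(T_ε) = Δ(w) ⊗ I` is a contraction for every `ε`, while the off-diagonal entry of `T_ε` is
unbounded as `ε → 0`; this contradicts 2-boundedness. -/

open scoped Kronecker

section L2OpNorm

variable {𝕜 : Type*} [RCLike 𝕜]

lemma Matrix.norm_entry_le_l2_opNorm {m n : Type*} [Fintype m] [Fintype n] [DecidableEq n]
    (A : Matrix m n 𝕜) (i : m) (j : n) : ‖A i j‖ ≤ ‖A‖ :=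
  calc ‖A i j‖ = ‖(WithLp.toLp 2 (A *ᵥ Pi.single j 1) : EuclideanSpace 𝕜 m) i‖ := by
        simp [mulVec_single]
    _ ≤ ‖(EuclideanSpace.equiv m 𝕜).symm (A *ᵥ EuclideanSpace.single j 1)‖ :=
        PiLp.norm_apply_le _ i
    _ ≤ ‖A‖ * ‖EuclideanSpace.single j (1 : 𝕜)‖ := A.l2_opNorm_mulVec _
    _ = ‖A‖ := by simp

lemma Matrix.isUnit_det_one_sub {m : Type*} [Fintype m] [DecidableEq m] {M : Matrix m m 𝕜}
    (h : ‖M‖ < 1) : IsUnit (1 - M).det :=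
  (isUnit_iff_isUnit_det _).mp (Units.oneSub M h).isUnit

lemma star_dotProduct_self_eq_norm_sq {n : Type*} [Fintype n] (x : n → 𝕜) :
    star x ⬝ᵥ x = ((‖(WithLp.toLp 2 x : EuclideanSpace 𝕜 n)‖ ^ 2 : ℝ) : 𝕜) := by
  rw [dotProduct_comm, ← EuclideanSpace.inner_eq_star_dotProduct, inner_self_eq_norm_sq_to_K,
    RCLike.ofReal_pow]

lemma Matrix.posDef_one_sub_mul_conjTranspose_self {m n : Type*} [Fintype m] [Fintype n]
    [DecidableEq m] [DecidableEq n] {B : Matrix m n 𝕜} (hB : ‖B‖ < 1) : (1 - B * Bᴴ).PosDef := by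
  refine posDef_iff_dotProduct_mulVec.mpr
    ⟨isHermitian_one.sub (isHermitian_mul_conjTranspose_self B), fun x hx => ?_⟩
  set u : EuclideanSpace 𝕜 m := WithLp.toLp 2 x
  have hu : 0 < ‖u‖ := by simpa [u] using hx
  have hBu : ‖(EuclideanSpace.equiv n 𝕜).symm (Bᴴ *ᵥ x)‖ < ‖u‖ :=
    calc _ ≤ ‖Bᴴ‖ * ‖u‖ := Bᴴ.l2_opNorm_mulVec u
      _ < ‖u‖ := by rw [l2_opNorm_conjTranspose]; exact mul_lt_of_lt_one_left hu hB
  have hquad : star x ⬝ᵥ ((1 - B * Bᴴ) *ᵥ x) =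
      star x ⬝ᵥ x - star (Bᴴ *ᵥ x) ⬝ᵥ (Bᴴ *ᵥ x) := by
    rw [sub_mulVec, one_mulVec, dotProduct_sub, ← mulVec_mulVec, dotProduct_mulVec,
      star_mulVec, conjTranspose_conjTranspose]
  rw [hquad, star_dotProduct_self_eq_norm_sq, star_dotProduct_self_eq_norm_sq,
    ← RCLike.ofReal_sub, RCLike.ofReal_pos, sub_pos]
  exact pow_lt_pow_left₀ hBu (norm_nonneg _) two_ne_zero

lemma Matrix.kronecker_one_mulVec {m n ι : Type*} [Fintype n] [Fintype ι] [DecidableEq ι]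
    (A : Matrix m n 𝕜) (x : n × ι → 𝕜) :
    (A ⊗ₖ (1 : Matrix ι ι 𝕜)) *ᵥ x = fun p => (A *ᵥ fun j => x (j, p.2)) p.1 := by
  ext ⟨i, k⟩
  simp [mulVec, dotProduct, Fintype.sum_prod_type, one_apply]

lemma Matrix.l2_opNorm_kronecker_one_le {m n ι : Type*} [Fintype m] [Fintype n] [Fintype ι]
    [DecidableEq n] [DecidableEq ι] (A : Matrix m n 𝕜) : ‖A ⊗ₖ (1 : Matrix ι ι 𝕜)‖ ≤ ‖A‖ := by
  rw [l2_opNorm_def]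
  refine ContinuousLinearMap.opNorm_le_bound _ (norm_nonneg _) fun x => ?_
  let col (k : ι) : EuclideanSpace 𝕜 n := WithLp.toLp 2 fun j => x (j, k)
  refine (sq_le_sq₀ (norm_nonneg _) (by positivity)).mp ?_
  calc _ = ∑ k, ‖(EuclideanSpace.equiv m 𝕜).symm (A *ᵥ col k)‖ ^ 2 := by
        simp only [LinearEquiv.trans_apply, LinearMap.coe_toContinuousLinearMap',
          EuclideanSpace.norm_sq_eq, ofLp_toLpLin, toLin'_apply, kronecker_one_mulVec,
          Fintype.sum_prod_type, PiLp.continuousLinearEquiv_symm_apply, col]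
        exact Finset.sum_comm
    _ ≤ ∑ k, (‖A‖ * ‖col k‖) ^ 2 := by
        gcongr with k
        exact A.l2_opNorm_mulVec _
    _ = (‖A‖ * ‖x‖) ^ 2 := by
        simp only [mul_pow, ← Finset.mul_sum]
        congr 1
        simp only [EuclideanSpace.norm_sq_eq, Fintype.sum_prod_type, col]
        exact Finset.sum_comm

end L2OpNorm

lemma isUnit_det_msqrt {n : Type*} [Fintype n] [DecidableEq n] {M : Matrix n n ℂ}
    (hM : M.PosDef) : IsUnit (msqrt M).det := by
  have hps : M.PosSemidef := hM.posSemidef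
  rw [msqrt, dif_pos hps, det_mul, det_mul, mul_right_comm, ← det_mul,
    Unitary.mul_star_self_of_mem hps.isHermitian.eigenvectorUnitary.prop, det_one, one_mul,
    det_diagonal, isUnit_iff_ne_zero, Finset.prod_ne_zero_iff]
  intro i _
  simpa using (Real.sqrt_pos.mpr (hM.eigenvalues_pos i)).ne'

lemma eq_of_dDelta_eq_zero {α m n : Type*} [Fintype m] [Fintype n] [DecidableEq m]
    [DecidableEq n] {Δ : α → Matrix m n ℂ} {z w : α} (hz : ‖Δ z‖ < 1) (hw : ‖Δ w‖ < 1)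
    (h : dDelta Δ z w = 0) : Δ z = Δ w := by
  set P := msqrt (1 - Δ w * (Δ w)ᴴ)
  set Q := (1 - (Δ w)ᴴ * Δ z)⁻¹ * msqrt (1 - (Δ w)ᴴ * Δ w)
  have hw' : ‖(Δ w)ᴴ‖ < 1 := by rwa [l2_opNorm_conjTranspose]
  have hP : IsUnit P.det := isUnit_det_msqrt (posDef_one_sub_mul_conjTranspose_self hw)
  have hQ : IsUnit Q.det := by
    have hwz : ‖(Δ w)ᴴ * Δ z‖ < 1 :=
      (l2_opNorm_mul _ _).trans_lt <|
        mul_lt_one_of_nonneg_of_lt_one_left (norm_nonneg _) hw' hz.le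
    rw [det_mul, det_nonsing_inv]
    exact (isUnit_det_one_sub hwz).ringInverse.mul <| isUnit_det_msqrt <| by
      simpa using posDef_one_sub_mul_conjTranspose_self hw'
  have hPQ : P⁻¹ * ((Δ z - Δ w) * Q) = 0 := norm_eq_zero.mp h
  rw [← sub_eq_zero]
  calc Δ z - Δ w = P * (P⁻¹ * ((Δ z - Δ w) * Q)) * Q⁻¹ := by
        rw [mul_nonsing_inv_cancel_left _ _ hP, mul_nonsing_inv_cancel_right _ _ hQ]
    _ = 0 := by rw [hPQ, Matrix.mul_zero, Matrix.zero_mul]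

lemma tpr_single_single {m : Type*} [DecidableEq m] (i : m) (k : Fin 2) :
    tpr (Pi.single i 1) (Pi.single k 1) = Pi.single (i, k) 1 := by
  ext ⟨i', k'⟩
  by_cases hi : i' = i <;> by_cases hk : k' = k <;> simp [tpr, hi, hk]

lemma Matrix.kronecker_one_mulVec_tpr {m n : Type*} [Fintype n] (A : Matrix m n ℂ)
    (ξ : n → ℂ) (x : Fin 2 → ℂ) :
    (A ⊗ₖ (1 : Matrix (Fin 2) (Fin 2) ℂ)) *ᵥ tpr ξ x = tpr (A *ᵥ ξ) x := by
  ext ⟨i, k⟩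
  rw [kronecker_one_mulVec]
  simp [tpr, mulVec, dotProduct, Finset.sum_mul, mul_assoc]

lemma Matrix.ext_of_mulVec_tpr {m n : Type*} [Fintype n] [DecidableEq n]
    {M N : Matrix m (n × Fin 2) ℂ} {v : Fin 2 → Fin 2 → ℂ}
    (hv : Submodule.span ℂ (Set.range v) = ⊤)
    (h : ∀ i j, M *ᵥ tpr (Pi.single i 1) (v j) = N *ᵥ tpr (Pi.single i 1) (v j)) : M = N := by
  ext p ⟨i, k⟩
  obtain ⟨c, hc⟩ := (Submodule.mem_span_range_iff_exists_fun ℂ).mp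
    (hv ▸ Submodule.mem_top : (Pi.single k 1 : Fin 2 → ℂ) ∈ Submodule.span ℂ (Set.range v))
  have hik : Pi.single (i, k) 1 = ∑ j, c j • tpr (Pi.single i 1) (v j) := by
    rw [← tpr_single_single, ← hc]
    ext q
    simp only [tpr, Finset.sum_apply, Pi.smul_apply, smul_eq_mul, Fin.sum_univ_two]
    ring
  have hcol : M *ᵥ Pi.single (i, k) 1 = N *ᵥ Pi.single (i, k) 1 := by
    simp only [hik, mulVec_sum, mulVec_smul, h]
  simpa [mulVec_single_one] using congrFun hcol p

lemma deltaTContract_of_eq {β : Type*} {s r : ℕ} {Δ : β → Matrix (Fin s) (Fin r) ℂ}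
    {v : Fin 2 → Fin 2 → ℂ} {z : Fin 2 → β} (hv : LinearIndependent ℂ v)
    (hΔ : Δ (z 0) = Δ (z 1)) (h1 : ‖Δ (z 0)‖ ≤ 1) : DeltaTContract Δ v z := by
  intro DT hDT
  have hspan : Submodule.span ℂ (Set.range v) = ⊤ :=
    hv.span_eq_top_of_card_eq_finrank' (by simp)
  have hDT' : DT = Δ (z 0) ⊗ₖ 1 := ext_of_mulVec_tpr hspan fun i j => by
    rw [hDT, kronecker_one_mulVec_tpr]
    fin_cases j <;> simp [hΔ]
  rw [hDT']
  exact (l2_opNorm_kronecker_one_le _).trans h1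

lemma isGenericTuple_shear {d : ℕ} {z w : Fin d → ℂ} (hzw : z ≠ w) {ε : ℂ} (hε : ε ≠ 0) :
    IsGenericTuple (fun i => !![z i, (w i - z i) / ε; 0, w i]) ![![1, 0], ![1, ε]] ![z, w] := by
  refine ⟨LinearIndependent.pair_iff.mpr fun a b hab => ?_, hzw, fun i j => ?_⟩
  · have h0 := congrFun hab 0
    have h1 := congrFun hab 1
    simp only [Pi.add_apply, Pi.smul_apply, Matrix.cons_val_zero, Matrix.cons_val_one,
      smul_eq_mul, mul_one, mul_zero, zero_add, Pi.zero_apply, mul_eq_zero] at h0 h1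
    have hb : b = 0 := h1.resolve_right hε
    exact ⟨by simpa [hb] using h0, hb⟩
  · fin_cases j <;> ext k <;> fin_cases k <;>
      simp [mulVec, dotProduct, Fin.sum_univ_two, div_mul_cancel₀ _ hε]

lemma exists_isGenericTuple_norm_gt {d : ℕ} {z w : Fin d → ℂ} (hzw : z ≠ w) (C : ℝ) :
    ∃ T v, IsGenericTuple T v ![z, w] ∧ ∃ i, C < ‖T i‖ := by
  obtain ⟨i, hi⟩ := Function.ne_iff.mp hzw
  have hwz : w i - z i ≠ 0 := sub_ne_zero.mpr (Ne.symm hi)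
  set c : ℝ := |C| + 1
  have hc : 0 < c := by positivity
  set ε : ℂ := (w i - z i) / c
  have hε : ε ≠ 0 := div_ne_zero hwz (by exact_mod_cast hc.ne')
  refine ⟨_, _, isGenericTuple_shear hzw hε, i, ?_⟩
  calc C < c := by linarith [le_abs_self C]
    _ = ‖(w i - z i) / ε‖ := by
        rw [div_div_cancel₀ hwz, Complex.norm_real, Real.norm_of_nonneg hc.le]
    _ ≤ ‖!![z i, (w i - z i) / ε; 0, w i]‖ :=
        norm_entry_le_l2_opNorm !![z i, (w i - z i) / ε; 0, w i] 0 1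

theorem dDelta_dist_of_twoBounding_general {d s r : ℕ} (E : Set (Fin d → ℂ))
    (Δ : (Fin d → ℂ) → Matrix (Fin s) (Fin r) ℂ)
    -- `B_Δ` is 2-bounding:
    (hbound : ∃ Cb : ℝ, ∀ (T : Fin d → Matrix (Fin 2) (Fin 2) ℂ) (v : Fin 2 → Fin 2 → ℂ)
      (zz : Fin 2 → Fin d → ℂ), IsGenericTuple T v zz → (∀ j, zz j ∈ BDelta E Δ) →
      DeltaTContract Δ v zz → ∀ i, ‖T i‖ ≤ Cb)
    (z w : Fin d → ℂ) (hz : z ∈ BDelta E Δ) (hw : w ∈ BDelta E Δ)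
    (h0 : dDelta Δ z w = 0) : z = w := by
  obtain ⟨Cb, hCb⟩ := hbound
  by_contra hzw
  obtain ⟨T, v, hT, i, hi⟩ := exists_isGenericTuple_norm_gt hzw Cb
  have hmem : ∀ j, ![z, w] j ∈ BDelta E Δ := Fin.forall_fin_two.mpr ⟨hz, hw⟩
  have hcontract : DeltaTContract Δ v ![z, w] :=
    deltaTContract_of_eq hT.1 (eq_of_dDelta_eq_zero hz.2 hw.2 h0) hz.2.le
  exact (hCb T v _ hT hmem hcontract i).not_gt hi

/-- **Proposition 5.4**: if `B_Δ` is 2-bounding then `d_Δ` is a distance on `B_Δ`. -/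
theorem dDelta_dist_of_twoBounding {d s r : ℕ} (E : Set (Fin d → ℂ)) (hEopen : IsOpen E)
    (Δ : (Fin d → ℂ) → Matrix (Fin s) (Fin r) ℂ)
    (hΔ : ∀ p q, DifferentiableOn ℂ (fun ζ => Δ ζ p q) E)
    (hconn : IsConnected (BDelta E Δ)) (hopen : IsOpen (BDelta E Δ))
    -- `B_Δ` is 2-bounding:
    (hbound : ∃ Cb : ℝ, ∀ (T : Fin d → Matrix (Fin 2) (Fin 2) ℂ) (v : Fin 2 → Fin 2 → ℂ)
      (zz : Fin 2 → Fin d → ℂ), IsGenericTuple T v zz → (∀ j, zz j ∈ BDelta E Δ) →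
      DeltaTContract Δ v zz → ∀ i, ‖T i‖ ≤ Cb)
    (z w : Fin d → ℂ) (hz : z ∈ BDelta E Δ) (hw : w ∈ BDelta E Δ)
    (h0 : dDelta Δ z w = 0) : z = w :=
  dDelta_dist_of_twoBounding_general E Δ hbound z w hz hw h0
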